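/- arXiv:1112.0605 — 2 statements merged into one kernel-verified Lean document; each statement's English description precedes it below -/
import Mathlib

section
/- Over a Prüfer domain, a submodule N of a module M is pure if and only if it is relatively divisible (rN = N ∩ rM for all r ∈ R). -/
open Pointwise TensorProduct Function

universe u v w

section Defs
variable (R : Type u) [CommRing R] [IsDomain R]

section Sub
variable {M : Type v} [AddCommGroup M] [Module R M]

/-- `N` is a pure submodule of `M`: every finite system of linear equations with
constants in `N` that is solvable in `M` is solvable in `N`. -/
def IsPureSub (N : Submodule R M) : Prop :=
  ∀ (m n : ℕ) (r : Fin n → Fin m → R) (a : Fin n → M),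
    (∀ i, a i ∈ N) →
    (∃ x : Fin m → M, ∀ i, ∑ j, r i j • x j = a i) →
    ∃ x : Fin m → M, (∀ j, x j ∈ N) ∧ ∀ i, ∑ j, r i j • x j = a i

/-- `N` is relatively divisible in `M`: `rN = N ⊓ rM` for all `r`. -/
def IsRDSub (N : Submodule R M) : Prop :=
  ∀ r : R, r • N = N ⊓ r • (⊤ : Submodule R M)

/-- `A` is a balanced submodule of `M`. -/
def IsBalancedSub (A : Submodule R M) : Prop :=
  NoZeroSMulDivisors R (M ⧸ A) ∧
  ∀ (J : Submodule R (FractionRing R)), J ≠ ⊥ →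
    ∀ φ : J →ₗ[R] M ⧸ A, ∃ ψ : J →ₗ[R] M, A.mkQ ∘ₗ ψ = φ

/-- `N` is pure in the submodule `N'`. -/
def IsPureIn (N N' : Submodule R M) : Prop :=
  N ≤ N' ∧ IsPureSub R (N.comap N'.subtype)

/-- `N` is balanced in the submodule `N'`. -/
def IsBalancedIn (N N' : Submodule R M) : Prop :=
  N ≤ N' ∧ IsBalancedSub R (N.comap N'.subtype)

/-- the quotient module `A / A₀` for submodules `A₀ ≤ A` of `M`. -/
abbrev SubQuot (A₀ A : Submodule R M) : Type v := A ⧸ (A₀.comap A.subtype)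
end Sub

/-- A balanced-exact sequence `0 → A → B → C → 0`. -/
def IsBalancedExactSeq {A : Type v} {B : Type w} {C : Type*} [AddCommGroup A]
    [AddCommGroup B] [AddCommGroup C] [Module R A] [Module R B] [Module R C]
    (f : A →ₗ[R] B) (g : B →ₗ[R] C) : Prop :=
  Function.Injective f ∧ Function.Exact f g ∧ Function.Surjective g ∧
  NoZeroSMulDivisors R C ∧
  ∀ (J : Submodule R (FractionRing R)), J ≠ ⊥ →
    ∀ φ : J →ₗ[R] C, ∃ ψ : J →ₗ[R] B, g ∘ₗ ψ = φ

/-- `P` is balanced-projective: it lifts along every balanced-exact sequence. -/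
def IsBalancedProjective (P : Type v) [AddCommGroup P] [Module R P] : Prop :=
  ∀ (B C : Type w) [AddCommGroup B] [AddCommGroup C] [Module R B] [Module R C]
    (g : B →ₗ[R] C), Function.Surjective g → NoZeroSMulDivisors R C →
    (∀ (J : Submodule R (FractionRing R)), J ≠ ⊥ →
      ∀ φ : J →ₗ[R] C, ∃ ψ : J →ₗ[R] B, g ∘ₗ ψ = φ) →
    ∀ φ : P →ₗ[R] C, ∃ ψ : P →ₗ[R] B, g ∘ₗ ψ = φ

/-- Rank of a module: dimension over `Frac R` of `Frac R ⊗ X`. -/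
noncomputable def moduleRank (X : Type v) [AddCommGroup X] [Module R X] : Cardinal :=
  Module.rank (FractionRing R) (FractionRing R ⊗[R] X)

/-- Completely decomposable: a direct sum of rank-one torsion-free modules. -/
def IsCompletelyDecomposable (P : Type v) [AddCommGroup P] [Module R P] : Prop :=
  ∃ (ι : Type v) (J : ι → Submodule R (FractionRing R)), (∀ i, J i ≠ ⊥) ∧
    Nonempty (P ≃ₗ[R] Π₀ i, J i)

end Defs

section AuxLemmas

open nonZeroDivisors

theorem myMemSmul {R : Type u} [CommRing R] {M : Type v} [AddCommGroup M] [Module R M]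
    (r : R) (Q : Submodule R M) (w : M) : w ∈ r • Q ↔ ∃ q ∈ Q, r • q = w := Iff.rfl

theorem myMapSmulMk {R : Type u} [CommRing R] (S : Submonoid R) {M : Type v} [AddCommGroup M]
    [Module R M] (r : R) (w : M) (σ : S) :
    algebraMap R (Localization S) r • LocalizedModule.mk w σ = LocalizedModule.mk (r • w) σ := by
  rw [← Localization.mk_one_eq_algebraMap, LocalizedModule.mk_smul_mk, one_mul]

theorem myMkSum {R : Type u} [CommRing R] (S : Submonoid R) {M : Type v} [AddCommGroup M]
    [Module R M] {ι : Type*} (s : Finset ι) (g : ι → M) (σ : S) :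
    (∑ j ∈ s, LocalizedModule.mk (g j) σ) = LocalizedModule.mk (∑ j ∈ s, g j) σ := by
  classical
  induction s using Finset.induction_on with
  | empty => simp [LocalizedModule.zero_mk]
  | @insert a s ha ih =>
    rw [Finset.sum_insert ha, Finset.sum_insert ha, ih, LocalizedModule.mk_add_mk, ← smul_add,
      LocalizedModule.mk_cancel_common_left]


theorem myExistsDvdAll {V : Type*} [CommRing V] (htot : ∀ a b : V, a ∣ b ∨ b ∣ a)
    {ι : Type*} [DecidableEq ι] (f : ι → V) (s : Finset ι) (hs : s.Nonempty) :
    ∃ i ∈ s, ∀ j ∈ s, f i ∣ f j := by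
  classical
  induction s using Finset.induction_on with
  | empty => exact absurd hs (by simp)
  | @insert a s ha ih =>
    rcases s.eq_empty_or_nonempty with rfl | hne
    · exact ⟨a, Finset.mem_insert_self _ _, by
        intro j hj
        rcases Finset.mem_insert.mp hj with rfl | h
        · exact dvd_rfl
        · exact absurd h (by simp)⟩
    · obtain ⟨i, hi, hall⟩ := ih hne
      rcases htot (f i) (f a) with h | h
      · exact ⟨i, Finset.mem_insert_of_mem hi, by
          intro j hj
          rcases Finset.mem_insert.mp hj with rfl | hj'
          · exact h
          · exact hall j hj'⟩
      · exact ⟨a, Finset.mem_insert_self _ _, by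
          intro j hj
          rcases Finset.mem_insert.mp hj with rfl | hj'
          · exact dvd_rfl
          · exact h.trans (hall j hj')⟩

theorem mySolve {V : Type*} [CommRing V] {W : Type*} [AddCommGroup W] [Module V W]
    (N' : Submodule V W) (htot : ∀ a b : V, a ∣ b ∨ b ∣ a)
    (hrd : ∀ (r : V) (c : W), c ∈ N' → (∃ u : W, r • u = c) → ∃ z ∈ N', r • z = c) :
    ∀ (n m : ℕ) (A : Fin n → Fin m → V) (a : Fin n → W), (∀ i, a i ∈ N') →
      (∃ u : Fin m → W, ∀ i, ∑ j, A i j • u j = a i) →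
      ∃ x : Fin m → W, (∀ j, x j ∈ N') ∧ ∀ i, ∑ j, A i j • x j = a i := by
  intro n
  induction n with
  | zero =>
    intro m A a _ _
    exact ⟨fun _ => 0, fun _ => zero_mem _, fun i => i.elim0⟩
  | succ n ih =>
    intro m A a haN hsolv
    obtain ⟨u, hu⟩ := hsolv
    rcases Nat.eq_zero_or_pos m with rfl | hm
    · refine ⟨fun j => j.elim0, fun j => j.elim0, fun i => ?_⟩
      have h1 := hu i
      simp only [Finset.univ_eq_empty, Finset.sum_empty] at h1 ⊢
      exact h1
    obtain ⟨⟨k, l⟩, -, hpiv⟩ := myExistsDvdAll htot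
      (fun q : Fin (n+1) × Fin m => A q.1 q.2) Finset.univ ⟨(0, ⟨0, hm⟩), Finset.mem_univ _⟩
    choose c hc using fun i => hpiv (i, l) (Finset.mem_univ _)
    choose d hd using fun j => hpiv (k, j) (Finset.mem_univ _)
    -- hc : ∀ i, A i l = A k l * c i ; hd : ∀ j, A k j = A k l * d j
    set p := A k l with hp
    obtain ⟨y, hyN, hy⟩ := ih m
      (fun i' j => A (k.succAbove i') j - c (k.succAbove i') * A k j)
      (fun i' => a (k.succAbove i') - c (k.succAbove i') • a k)
      (fun i' => sub_mem (haN _) (Submodule.smul_mem _ _ (haN k)))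
      ⟨u, fun i' => by
        simp only [sub_smul, mul_smul, Finset.sum_sub_distrib]
        rw [hu, ← Finset.smul_sum, hu]⟩
    set τ : W := a k - (∑ j, A k j • y j) + p • y l with hτ
    have hτN : τ ∈ N' := by
      refine add_mem (sub_mem (haN k) (Submodule.sum_mem _ fun j _ => Submodule.smul_mem _ _ (hyN j)))
        (Submodule.smul_mem _ _ (hyN l))
    have hτp : ∃ w : W, p • w = τ := by
      refine ⟨(∑ j, d j • u j) - (∑ j, d j • y j) + y l, ?_⟩
      rw [smul_add, smul_sub, Finset.smul_sum, Finset.smul_sum]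
      have e1 : ∀ w : W, ∀ j, p • d j • w = A k j • w := fun w j => by
        rw [← mul_smul, ← hd j]
      simp only [e1]
      rw [hu k, hτ]
    obtain ⟨z, hzN, hz⟩ := hrd p τ hτN hτp
    set x := Function.update y l z with hx
    have hsum : ∀ g : Fin m → V, (∑ j, g j • x j) = (∑ j, g j • y j) - g l • y l + g l • z := by
      intro g
      calc (∑ j, g j • x j) = ∑ j, Function.update (fun j => g j • y j) l (g l • z) j := by
            refine Finset.sum_congr rfl fun j _ => ?_
            rcases eq_or_ne j l with rfl | hj
            · simp [hx]
            · simp [hx, Function.update_of_ne hj]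
          _ = g l • z + ∑ j ∈ Finset.univ.erase l, g j • y j := by
            rw [Finset.sum_update_of_mem (Finset.mem_univ l), Finset.erase_eq]
          _ = (∑ j, g j • y j) - g l • y l + g l • z := by
            rw [Finset.sum_erase_eq_sub (Finset.mem_univ l)]
            abel
    have hxN : ∀ j, x j ∈ N' := by
      intro j
      rcases eq_or_ne j l with rfl | hj
      · simpa [hx] using hzN
      · simpa [hx, Function.update_of_ne hj] using hyN j
    refine ⟨x, hxN, fun i => ?_⟩
    rcases eq_or_ne i k with rfl | hik
    · rw [hsum, hz, hτ]
      abel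
    · obtain ⟨i', rfl⟩ := Fin.exists_succAbove_eq hik
      rw [hsum]
      have key := hy i'
      have e2 : ∀ j, A (k.succAbove i') j • y j
          = (A (k.succAbove i') j - c (k.succAbove i') * A k j) • y j
            + c (k.succAbove i') • (A k j • y j) := fun j => by
        rw [sub_smul, ← mul_smul]; abel
      have e3 : (∑ j, A (k.succAbove i') j • y j)
          = (a (k.succAbove i') - c (k.succAbove i') • a k)
            + c (k.succAbove i') • (∑ j, A k j • y j) := by
        calc (∑ j, A (k.succAbove i') j • y j)
            = (∑ j, ((A (k.succAbove i') j - c (k.succAbove i') * A k j) • y j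
                + c (k.succAbove i') • (A k j • y j))) := Finset.sum_congr rfl fun j _ => e2 j
          _ = _ := by
              rw [Finset.sum_add_distrib, key, ← Finset.smul_sum]
    -- remaining goal to fill
      have e4 : A (k.succAbove i') l • y l = c (k.succAbove i') • (p • y l) := by
        rw [show A (k.succAbove i') l = p * c (k.succAbove i') from hc _, mul_comm, mul_smul]
      have e5 : A (k.succAbove i') l • z = c (k.succAbove i') • τ := by
        rw [show A (k.succAbove i') l = p * c (k.succAbove i') from hc _, mul_comm, mul_smul, hz]
      rw [e3, e4, e5, hτ]
      rw [smul_add, smul_sub]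
      abel

theorem myPruferPair {R : Type u} [CommRing R] [IsDomain R]
    (hPrufer : ∀ I : Ideal R, I.FG → I ≠ ⊥ →
      IsUnit (I : FractionalIdeal (nonZeroDivisors R) (FractionRing R)))
    (a b : R) : ∃ e f s t : R, e + f = 1 ∧ e * b = s * a ∧ f * a = t * b := by
  classical
  by_cases ha : a = 0
  · exact ⟨0, 1, 0, 0, by ring, by ring, by rw [ha]; ring⟩
  set K := FractionRing R
  set I₀ : Ideal R := Ideal.span {a, b} with hI₀
  have hFG : I₀.FG := ⟨{a, b}, by simp [hI₀]⟩
  have hne : I₀ ≠ ⊥ := by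
    intro h
    have haI : a ∈ I₀ := Ideal.subset_span (by simp)
    rw [h] at haI
    exact ha (by simpa using haI)
  obtain ⟨J, hIJ⟩ := isUnit_iff_exists_inv.mp (hPrufer I₀ hFG hne)
  have h1 : (1 : K) ∈ ((I₀ : FractionalIdeal R⁰ K) * J : FractionalIdeal R⁰ K) := by
    rw [hIJ]; exact FractionalIdeal.one_mem_one _
  have h1' : (1 : K) ∈ ((I₀ : FractionalIdeal R⁰ K) : Submodule R K) * (J : Submodule R K) := by
    rw [← FractionalIdeal.coe_mul]
    exact (FractionalIdeal.mem_coe).mpr h1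
  have inj : Function.Injective (algebraMap R K) := IsFractionRing.injective R K
  have main : ∀ z : K, z ∈ ((I₀ : FractionalIdeal R⁰ K) : Submodule R K) * (J : Submodule R K) →
      ∃ e f s t : R, algebraMap R K (e + f) = z ∧ e * b = s * a ∧ f * a = t * b := by
    intro z hz
    refine Submodule.mul_induction_on hz ?_ ?_
    · intro x hx y hy
      obtain ⟨r, hr, rfl⟩ := (FractionalIdeal.mem_coeIdeal _).mp
        ((FractionalIdeal.mem_coe).mp hx)
      obtain ⟨α, β, hab⟩ := Submodule.mem_span_pair.mp hr
      have hyJ : y ∈ J := (FractionalIdeal.mem_coe).mp hy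
      have haI : algebraMap R K a ∈ (I₀ : FractionalIdeal R⁰ K) :=
        FractionalIdeal.mem_coeIdeal_of_mem _ (Ideal.subset_span (by simp))
      have hbI : algebraMap R K b ∈ (I₀ : FractionalIdeal R⁰ K) :=
        FractionalIdeal.mem_coeIdeal_of_mem _ (Ideal.subset_span (by simp))
      have hya : y * algebraMap R K a ∈ (1 : FractionalIdeal R⁰ K) := by
        rw [← hIJ, mul_comm]
        exact FractionalIdeal.mul_mem_mul hyJ haI
      have hyb : y * algebraMap R K b ∈ (1 : FractionalIdeal R⁰ K) := by
        rw [← hIJ, mul_comm]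
        exact FractionalIdeal.mul_mem_mul hyJ hbI
      obtain ⟨sa, hsa⟩ := (FractionalIdeal.mem_one_iff _).mp hya
      obtain ⟨ta, hta⟩ := (FractionalIdeal.mem_one_iff _).mp hyb
      have hkey : sa * b = ta * a := by
        apply inj
        rw [map_mul, map_mul, hsa, hta]
        ring
      refine ⟨α * sa, β * ta, α * ta, β * sa, ?_, by linear_combination α * hkey,
        by linear_combination (-β) * hkey⟩
      rw [map_add, map_mul, map_mul, hsa, hta, ← hab]
      simp only [smul_eq_mul, map_add, map_mul]
      ring
    · rintro x y ⟨e, f, s, t, hx, hx2, hx3⟩ ⟨e', f', s', t', hy, hy2, hy3⟩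
      exact ⟨e + e', f + f', s + s', t + t', by rw [← hx, ← hy, ← map_add]; congr 1; ring, by linear_combination hx2 + hy2,
        by linear_combination hx3 + hy3⟩
  obtain ⟨e, f, s, t, h1, h2, h3⟩ := main 1 h1'
  exact ⟨e, f, s, t, inj (by rw [h1, map_one]), h2, h3⟩

theorem pure_iff_relativelyDivisible_of_prufer (R : Type u) [CommRing R] [IsDomain R]
    (hPrufer : ∀ I : Ideal R, I.FG → I ≠ ⊥ →
      IsUnit (I : FractionalIdeal (nonZeroDivisors R) (FractionRing R)))
    {M : Type u} [AddCommGroup M] [Module R M] (N : Submodule R M) :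
    IsPureSub R N ↔ IsRDSub R N := by
  classical
  constructor
  · -- pure → relatively divisible
    intro hpure r
    refine le_antisymm ?_ ?_
    · intro w hw
      obtain ⟨q, hq, rfl⟩ := (myMemSmul r N w).mp hw
      exact Submodule.mem_inf.mpr ⟨N.smul_mem r hq, (myMemSmul r ⊤ _).mpr ⟨q, trivial, rfl⟩⟩
    · rintro w hw
      obtain ⟨hwN, hwr⟩ := Submodule.mem_inf.mp hw
      obtain ⟨q, -, rfl⟩ := (myMemSmul r ⊤ w).mp hwr
      obtain ⟨x, hxN, hx⟩ := hpure 1 1 (fun _ _ => r) (fun _ => r • q) (fun _ => hwN)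
        ⟨fun _ => q, fun i => by simp [Fin.sum_univ_one]⟩
      have h0 := hx 0
      rw [Fin.sum_univ_one] at h0
      exact (myMemSmul r N _).mpr ⟨x 0, hxN 0, h0⟩
  · -- relatively divisible → pure
    intro hRD m n A a haN hsolv
    obtain ⟨u, hu⟩ := hsolv
    let I : Ideal R :=
      { carrier := {r : R | ∃ x : Fin m → M, (∀ j, x j ∈ N) ∧ ∀ i, ∑ j, A i j • x j = r • a i}
        add_mem' := by
          rintro r r' ⟨x, hxN, hx⟩ ⟨x', hxN', hx'⟩
          refine ⟨fun j => x j + x' j, fun j => add_mem (hxN j) (hxN' j), fun i => ?_⟩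
          simp only [smul_add, Finset.sum_add_distrib, hx i, hx' i, add_smul]
        zero_mem' := ⟨fun _ => 0, fun _ => zero_mem _, fun i => by simp⟩
        smul_mem' := by
          rintro s r ⟨x, hxN, hx⟩
          refine ⟨fun j => s • x j, fun j => Submodule.smul_mem _ _ (hxN j), fun i => ?_⟩
          calc ∑ j, A i j • s • x j = s • ∑ j, A i j • x j := by
                rw [Finset.smul_sum]
                exact Finset.sum_congr rfl fun j _ => smul_comm _ _ _
            _ = (s • r) • a i := by rw [hx i, smul_eq_mul, mul_smul] }
    suffices h1 : (1 : R) ∈ I by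
      obtain ⟨x, hxN, hx⟩ := h1
      exact ⟨x, hxN, fun i => by simpa using hx i⟩
    by_contra h1
    obtain ⟨p, hpmax, hIp⟩ := Ideal.exists_le_maximal I (fun h => h1 (h ▸ Submodule.mem_top))
    haveI : p.IsMaximal := hpmax
    set S := p.primeCompl with hS
    have hpair := myPruferPair hPrufer
    -- total divisibility in the localization
    have htot : ∀ α β : Localization S, α ∣ β ∨ β ∣ α := by
      intro α β
      obtain ⟨⟨a₁, s₁⟩, rfl⟩ : ∃ q : R × S, Localization.mk q.1 q.2 = α :=
        Localization.induction_on α fun q => ⟨q, rfl⟩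
      obtain ⟨⟨b₁, t₁⟩, rfl⟩ : ∃ q : R × S, Localization.mk q.1 q.2 = β :=
        Localization.induction_on β fun q => ⟨q, rfl⟩
      obtain ⟨e, f, s', t', hef, heb, hfa⟩ := hpair a₁ b₁
      have hef' : e ∉ p ∨ f ∉ p := by
        by_contra hc
        push_neg at hc
        have hmem := p.add_mem hc.1 hc.2
        rw [hef] at hmem
        exact hpmax.ne_top ((Ideal.eq_top_iff_one p).mpr hmem)
      rcases hef' with he | hf
      · left
        refine ⟨Localization.mk (s' * s₁) (⟨e, he⟩ * t₁), ?_⟩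
        rw [Localization.mk_mul, Localization.mk_eq_mk_iff, Localization.r_iff_exists]
        refine ⟨1, ?_⟩
        push_cast
        linear_combination (s₁ : R) * (t₁ : R) * heb
      · right
        refine ⟨Localization.mk (t' * t₁) (⟨f, hf⟩ * s₁), ?_⟩
        rw [Localization.mk_mul, Localization.mk_eq_mk_iff, Localization.r_iff_exists]
        refine ⟨1, ?_⟩
        push_cast
        linear_combination (s₁ : R) * (t₁ : R) * hfa
    -- the localized submodule
    have hNp_mem : ∀ z : LocalizedModule S M,
        z ∈ N.localized S ↔ ∃ n' ∈ N, ∃ s : S, LocalizedModule.mk n' s = z := by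
      intro z
      constructor
      · rintro ⟨n', hn', s, h⟩
        exact ⟨n', hn', s, (IsLocalizedModule.mk_eq_mk' s n').trans h⟩
      · rintro ⟨n', hn', s, h⟩
        exact ⟨n', hn', s, (IsLocalizedModule.mk_eq_mk' s n').symm.trans h⟩
    -- relative divisibility in the localization
    have hrdp : ∀ (ρ : Localization S) (cc : LocalizedModule S M), cc ∈ N.localized S →
        (∃ uu, ρ • uu = cc) → ∃ ν ∈ N.localized S, ρ • ν = cc := by
      rintro ρ cc hcc ⟨uu, huu⟩
      obtain ⟨⟨r₀, s₀⟩, rfl⟩ : ∃ q : R × S, Localization.mk q.1 q.2 = ρ :=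
        Localization.induction_on ρ fun q => ⟨q, rfl⟩
      obtain ⟨m₀, τ, rfl⟩ : ∃ (m₀ : M) (τ : S), LocalizedModule.mk m₀ τ = uu :=
        LocalizedModule.induction_on (fun m₀ τ => ⟨m₀, τ, rfl⟩) uu
      obtain ⟨n₀, hn₀, σ, hσ⟩ := (hNp_mem cc).mp hcc
      subst hσ
      rw [LocalizedModule.mk_smul_mk, LocalizedModule.mk_eq] at huu
      obtain ⟨v, hv⟩ := huu
      simp only [Submonoid.smul_def, Submonoid.coe_mul, ← mul_smul] at hv
      -- hv : (↑v * ↑σ * r₀) • m₀ = (↑v * (↑s₀ * ↑τ)) • n₀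
      have hv' : ((v : R) * ((s₀ : R) * (τ : R))) • n₀ = r₀ • (((v : R) * (σ : R)) • m₀) := by
        rw [← hv, show (v : R) * ((σ : R) * r₀) = r₀ * ((v : R) * (σ : R)) by ring, mul_smul]
      have hmem : ((v : R) * ((s₀ : R) * (τ : R))) • n₀ ∈ N ⊓ r₀ • (⊤ : Submodule R M) := by
        refine Submodule.mem_inf.mpr ⟨N.smul_mem _ hn₀, ?_⟩
        rw [hv']
        exact (myMemSmul r₀ ⊤ _).mpr ⟨_, trivial, rfl⟩
      rw [← hRD r₀] at hmem
      obtain ⟨n₁, hn₁, hn₁eq⟩ := (myMemSmul r₀ N _).mp hmem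
      refine ⟨LocalizedModule.mk n₁ (v * τ * σ), (hNp_mem _).mpr ⟨n₁, hn₁, _, rfl⟩, ?_⟩
      rw [LocalizedModule.mk_smul_mk, LocalizedModule.mk_eq]
      refine ⟨1, ?_⟩
      simp only [Submonoid.smul_def, Submonoid.coe_mul, OneMemClass.coe_one, one_smul,
        ← mul_smul]
      rw [mul_smul, hn₁eq]
      simp only [← mul_smul]
      congr 1
      ring
    -- solve the localized system
    obtain ⟨x', hx'N, hx'⟩ := mySolve (N.localized S) htot hrdp n m
      (fun i j => algebraMap R (Localization S) (A i j))
      (fun i => LocalizedModule.mk (a i) 1)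
      (fun i => (hNp_mem _).mpr ⟨a i, haN i, 1, rfl⟩)
      ⟨fun j => LocalizedModule.mk (u j) 1, fun i => by
        calc ∑ j, algebraMap R (Localization S) (A i j) • LocalizedModule.mk (u j) 1
            = ∑ j, LocalizedModule.mk (A i j • u j) 1 :=
              Finset.sum_congr rfl fun j _ => myMapSmulMk S (A i j) (u j) 1
          _ = LocalizedModule.mk (∑ j, A i j • u j) 1 := myMkSum S _ _ 1
          _ = LocalizedModule.mk (a i) 1 := by rw [hu i]⟩
    -- extract a common denominator and contradict I ≤ p
    choose n' hn'N s'' hs'' using fun j => (hNp_mem (x' j)).mp (hx'N j)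
    set σ : S := ∏ j, s'' j with hσdef
    have hts : ∀ j, (∏ j' ∈ Finset.univ.erase j, s'' j') * s'' j = σ := fun j =>
      Finset.prod_erase_mul _ _ (Finset.mem_univ j)
    have hxj : ∀ j, x' j
        = LocalizedModule.mk (((∏ j' ∈ Finset.univ.erase j, s'' j' : S) : R) • n' j) σ := by
      intro j
      rw [← hs'' j, ← hts j, ← Submonoid.smul_def]
      exact (LocalizedModule.mk_cancel_common_left _ _ (n' j)).symm
    have main2 : ∀ i, LocalizedModule.mk
        (∑ j, A i j • (((∏ j' ∈ Finset.univ.erase j, s'' j' : S) : R) • n' j)) σ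
        = LocalizedModule.mk (a i) 1 := by
      intro i
      rw [← myMkSum]
      calc ∑ j, LocalizedModule.mk
            (A i j • (((∏ j' ∈ Finset.univ.erase j, s'' j' : S) : R) • n' j)) σ
          = ∑ j, algebraMap R (Localization S) (A i j) • x' j :=
            Finset.sum_congr rfl fun j _ => by rw [hxj j, myMapSmulMk]
        _ = LocalizedModule.mk (a i) 1 := hx' i
    choose v hv using fun i => LocalizedModule.mk_eq.mp (main2 i)
    set C : S := ∏ i, v i with hCdef
    have hDC : ∀ i, (∏ i' ∈ Finset.univ.erase i, v i') * v i = C := fun i =>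
      Finset.prod_erase_mul _ _ (Finset.mem_univ i)
    have hCI : ((C : R) * (σ : R)) ∈ I := by
      refine ⟨fun j => (C : R) • (((∏ j' ∈ Finset.univ.erase j, s'' j' : S) : R) • n' j),
        fun j => N.smul_mem _ (N.smul_mem _ (hn'N j)), fun i => ?_⟩
      have hvi := hv i
      simp only [Submonoid.smul_def, Submonoid.coe_mul, OneMemClass.coe_one, one_smul] at hvi
      have hC : (C : R) = ((∏ i' ∈ Finset.univ.erase i, v i' : S) : R) * (v i : R) := by
        rw [← Submonoid.coe_mul, hDC i]
      calc ∑ j, A i j • ((C : R) • (((∏ j' ∈ Finset.univ.erase j, s'' j' : S) : R) • n' j))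
          = ((∏ i' ∈ Finset.univ.erase i, v i' : S) : R) • ((v i : R)
              • ∑ j, A i j • (((∏ j' ∈ Finset.univ.erase j, s'' j' : S) : R) • n' j)) := by
            rw [Finset.smul_sum, Finset.smul_sum]
            refine Finset.sum_congr rfl fun j _ => ?_
            simp only [smul_smul]
            rw [hC]
            congr 1
            ring
        _ = ((∏ i' ∈ Finset.univ.erase i, v i' : S) : R) • ((v i : R) • ((σ : R) • a i)) := by
            rw [hvi]
        _ = ((C : R) * (σ : R)) • a i := by
            simp only [smul_smul]
            rw [hC]
            congr 1
            ring
    have hinp : ((C : R) * (σ : R)) ∈ p := hIp hCI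
    have hninp : ((C : R) * (σ : R)) ∉ p := by
      have hmem := (C * σ).2
      rwa [Submonoid.coe_mul] at hmem
    exact hninp hinp

end AuxLemmas
end

section
/- Consider a commutative diagram of R-modules with exact rows 0 → L → N →^α M → 0 and 0 → L' → N' →^β M' → 0, vertical maps including μ : N → N' and τ : M → M', where M and M' are torsion-free. If the top row is balanced-exact and there exists a homomorphism ρ : M' → M with τ ∘ ρ = id_{M'}, then the bottom row is balanced-exact. -/
open Pointwise TensorProduct Function

universe u v w

theorem balancedExact_of_commDiagram (R : Type u) [CommRing R] [IsDomain R]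
    {L N M L' N' M' : Type u}
    [AddCommGroup L] [AddCommGroup N] [AddCommGroup M]
    [AddCommGroup L'] [AddCommGroup N'] [AddCommGroup M']
    [Module R L] [Module R N] [Module R M]
    [Module R L'] [Module R N'] [Module R M']
    [NoZeroSMulDivisors R M] [NoZeroSMulDivisors R M']
    (f : L →ₗ[R] N) (α : N →ₗ[R] M) (f' : L' →ₗ[R] N') (β : N' →ₗ[R] M')
    (lam : L →ₗ[R] L') (μ : N →ₗ[R] N') (τ : M →ₗ[R] M')
    (hcomm₁ : μ ∘ₗ f = f' ∘ₗ lam) (hcomm₂ : τ ∘ₗ α = β ∘ₗ μ)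
    (htop : IsBalancedExactSeq R f α)
    (hinj : Function.Injective f') (hexact : Function.Exact f' β)
    (hsurj : Function.Surjective β)
    (ρ : M' →ₗ[R] M) (hρ : τ ∘ₗ ρ = LinearMap.id) :
    IsBalancedExactSeq R f' β := by
  refine ⟨hinj, hexact, hsurj, inferInstance, ?_⟩
  intro J hJ φ
  obtain ⟨ψ₀, hψ₀⟩ := htop.2.2.2.2 J hJ (ρ ∘ₗ φ)
  refine ⟨μ ∘ₗ ψ₀, ?_⟩
  rw [← LinearMap.comp_assoc, ← hcomm₂, LinearMap.comp_assoc, hψ₀,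
    ← LinearMap.comp_assoc, hρ, LinearMap.id_comp]
end
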